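/- arXiv:2409.00679 — 2 statements merged into one kernel-verified Lean document; each statement's English description precedes it below -/
import Mathlib

section
/- Let ρ*, ρ ∈ ℝ and α, β ∈ ℝ satisfy the matrix equation R(α)^T · diag(1, ρ) · R(β) = diag(1, ρ*), where R(θ) is the 2×2 rotation matrix [[cos θ, -sin θ],[sin θ, cos θ]]. If |ρ*| < 1, then cos α · cos β = 1 and sin α · sin β = 0; in particular cos α = cos β = 1 or cos α = cos β = -1, and ρ = ρ*. -/
open Matrix Real

/-- If `R(α)ᵀ · diag(1, ρ) · R(β) = diag(1, ρ*)` with `|ρ*| < 1`, then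
`cos α cos β = 1`, `sin α sin β = 0`, hence `cos α = cos β = 1` or
`cos α = cos β = -1`, and `ρ = ρ*`. -/
theorem rotation_diag_identification (ρ ρstar α β : ℝ)
    (h : (!![Real.cos α, -Real.sin α; Real.sin α, Real.cos α])ᵀ *
          Matrix.diagonal ![1, ρ] *
          !![Real.cos β, -Real.sin β; Real.sin β, Real.cos β] =
        Matrix.diagonal ![1, ρstar])
    (hρstar : |ρstar| < 1) :
    Real.cos α * Real.cos β = 1 ∧ Real.sin α * Real.sin β = 0 ∧
      ((Real.cos α = 1 ∧ Real.cos β = 1) ∨ (Real.cos α = -1 ∧ Real.cos β = -1)) ∧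
      ρ = ρstar := by
  have e11 := congrFun (congrFun h 0) 0
  have e12 := congrFun (congrFun h 0) 1
  have e21 := congrFun (congrFun h 1) 0
  have e22 := congrFun (congrFun h 1) 1
  simp [Matrix.mul_apply, Fin.sum_univ_succ, Matrix.diagonal] at e11 e12 e21 e22
  set cA := Real.cos α with hcA
  set sA := Real.sin α with hsA
  set cB := Real.cos β with hcB
  set sB := Real.sin β with hsB
  have pa : sA ^ 2 + cA ^ 2 = 1 := Real.sin_sq_add_cos_sq α
  have pb : sB ^ 2 + cB ^ 2 = 1 := Real.sin_sq_add_cos_sq β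
  -- combinations corresponding to angle-sum formulas
  have hu : (1 + ρ) * (sA * cB - cA * sB) = 0 := by linear_combination e12 - e21
  have hv : (1 - ρ) * (sA * cB + cA * sB) = 0 := by linear_combination -e12 - e21
  have hp : (1 + ρ) * (cA * cB + sA * sB) = 1 + ρstar := by linear_combination e11 + e22
  have hq : (1 - ρ) * (cA * cB - sA * sB) = 1 - ρstar := by linear_combination e11 - e22
  have hpu : (cA * cB + sA * sB) ^ 2 + (sA * cB - cA * sB) ^ 2 = 1 := by
    linear_combination (sB ^ 2 + cB ^ 2) * pa + pb
  have hqv : (cA * cB - sA * sB) ^ 2 + (sA * cB + cA * sB) ^ 2 = 1 := by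
    linear_combination (sB ^ 2 + cB ^ 2) * pa + pb
  have h1 : (1 + ρ) ^ 2 = (1 + ρstar) ^ 2 := by
    linear_combination -(1 + ρ) ^ 2 * hpu +
      ((1 + ρ) * (cA * cB + sA * sB) + (1 + ρstar)) * hp +
      (1 + ρ) * (sA * cB - cA * sB) * hu
  have h2 : (1 - ρ) ^ 2 = (1 - ρstar) ^ 2 := by
    linear_combination -(1 - ρ) ^ 2 * hqv +
      ((1 - ρ) * (cA * cB - sA * sB) + (1 - ρstar)) * hq +
      (1 - ρ) * (sA * cB + cA * sB) * hv
  have hρ : ρ = ρstar := by linear_combination (h1 - h2) / 4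
  obtain ⟨hl, hr⟩ := abs_lt.mp hρstar
  have hps : (1 : ℝ) + ρstar > 0 := by linarith
  have hms : (1 : ℝ) - ρstar > 0 := by linarith
  subst hρ
  have hp1 : cA * cB + sA * sB = 1 :=
    mul_left_cancel₀ (ne_of_gt hps) (by linarith [hp])
  have hq1 : cA * cB - sA * sB = 1 :=
    mul_left_cancel₀ (ne_of_gt hms) (by linarith [hq])
  have hcc : cA * cB = 1 := by linarith
  have hss : sA * sB = 0 := by linarith
  refine ⟨hcc, hss, ?_, rfl⟩
  clear h e11 e12 e21 e22 hu hv hp hq hpu hqv h1 h2 hp1 hq1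
  have hcB2 : cB ^ 2 ≤ 1 := by nlinarith [sq_nonneg sB]
  have hcA2le : cA ^ 2 ≤ 1 := by nlinarith [sq_nonneg sA]
  have hsq : cA ^ 2 * cB ^ 2 = 1 := by nlinarith [hcc]
  have hcA2 : cA * cA = 1 := by nlinarith [hsq, hcB2, hcA2le, sq_nonneg cA]
  rcases mul_self_eq_one_iff.mp hcA2 with h1' | h1'
  · exact Or.inl ⟨h1', by linear_combination hcc - cB * h1'⟩
  · exact Or.inr ⟨h1', by linear_combination -hcc + cB * h1'⟩
end

section
/- Let x, y, z, w be real numbers with x·y ≠ 0, and suppose x y = ρ a b, ρ' x c = x z (with x ≠ 0, c ≠ 0 so ρ' c = z), and suppose six relations of the form λ*_{7}λ*_{8} = ρ λ₇ λ₈, ρ* λ*₇ λ*₉ = λ₇ λ₉', ρ* λ*₇ λ*₁₀ = ρ λ₇ λ₁₀', ρ* λ*₈ λ*₉ = ρ λ₈' λ₉', ρ* λ*₈ λ*₁₀ = λ₈' λ₁₀', λ*₉ λ*₁₀ = ρ λ₉' λ₁₀' hold with all λ-quantities nonzero. Then (ρ*)⁴ ρ⁴ = ρ², and hence |ρ*|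 = |ρ| = 1. -/
/-- The six bilinear relations arising from a cross-assignment of the
items of two group factors, with all loadings nonzero and `ρ, ρ*` correlations
(so `|ρ| ≤ 1`, `|ρ*| ≤ 1`), force `(ρ*)⁴ ρ⁴ = ρ²` and hence `|ρ*| = |ρ| = 1`. -/
theorem six_bilinear_relations_force_unit_corr
    (ρ ρstar l7 l8 l9 l10 m7 m8 m9 m10 : ℝ)
    (hl7 : l7 ≠ 0) (hl8 : l8 ≠ 0) (hl9 : l9 ≠ 0) (hl10 : l10 ≠ 0)
    (hm7 : m7 ≠ 0) (hm8 : m8 ≠ 0) (hm9 : m9 ≠ 0) (hm10 : m10 ≠ 0)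
    (hρ : |ρ| ≤ 1) (hρstar : |ρstar| ≤ 1)
    (e1 : l7 * l8 = ρ * m7 * m8)
    (e2 : ρstar * l7 * l9 = m7 * m9)
    (e3 : ρstar * l7 * l10 = ρ * m7 * m10)
    (e4 : ρstar * l8 * l9 = ρ * m8 * m9)
    (e5 : ρstar * l8 * l10 = m8 * m10)
    (e6 : l9 * l10 = ρ * m9 * m10) :
    ρstar ^ 4 * ρ ^ 4 = ρ ^ 2 ∧ |ρstar| = 1 ∧ |ρ| = 1 := by
  have hL : l7 * l8 * l9 * l10 ≠ 0 := by positivity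
  have hM : m7 * m8 * m9 * m10 ≠ 0 := by positivity
  -- product of e1 and e6
  have h16 : l7 * l8 * (l9 * l10) = (ρ * m7 * m8) * (ρ * m9 * m10) := by rw [e1, e6]
  -- product of e2 and e5
  have h25 : (ρstar * l7 * l9) * (ρstar * l8 * l10) = (m7 * m9) * (m8 * m10) := by
    rw [e2, e5]
  -- product of e3 and e4
  have h34 : (ρstar * l7 * l10) * (ρstar * l8 * l9) = (ρ * m7 * m10) * (ρ * m8 * m9) := by
    rw [e3, e4]
  have hs2 : ρstar ^ 2 = 1 := by
    have h1 : ρstar ^ 2 * (l7 * l8 * l9 * l10) = l7 * l8 * l9 * l10 := by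
      nlinarith [h34, h16]
    have := mul_right_cancel₀ hL (by linarith : ρstar ^ 2 * (l7 * l8 * l9 * l10)
        = 1 * (l7 * l8 * l9 * l10))
    exact this
  have hr2 : ρ ^ 2 = 1 := by
    have h1 : ρ ^ 2 * (m7 * m8 * m9 * m10) = m7 * m8 * m9 * m10 := by
      nlinarith [h25, h16, hs2]
    have := mul_right_cancel₀ hM (by linarith : ρ ^ 2 * (m7 * m8 * m9 * m10)
        = 1 * (m7 * m8 * m9 * m10))
    exact this
  refine ⟨by rw [show ρstar ^ 4 * ρ ^ 4 = (ρstar ^ 2) ^ 2 * (ρ ^ 2) ^ 2 from by ring, hs2, hr2]; norm_num, ?_, ?_⟩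
  · have h : |ρstar| ^ 2 = 1 := by rw [sq_abs]; exact hs2
    nlinarith [abs_nonneg ρstar]
  · have h : |ρ| ^ 2 = 1 := by rw [sq_abs]; exact hr2
    nlinarith [abs_nonneg ρ]
end
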